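/- Let α be a nonempty finite set and let μ, ν be probability measures on α. Then there exists an optimal coupling of μ and ν: a probability measure π on α × α whose first marginal is μ and whose second marginal is ν, satisfying π({(a,b) : a ≠ b}) = d_TV(μ, ν). Moreover, every coupling π' of μ and ν satisfies π'({(a,b) : a ≠ b}) ≥ d_TV(μ, ν), so the optimal coupling achieves the infimum inf_{π ∈ M} π(ξ_1 ≠ ξ_2) over the set M of all couplings of μ and ν. -/

import Mathlib

open MeasureTheory

/-- The total variation distance between two (probability) measures on a finite
space: `d_TV(μ, ν) = sup_S |μ(S) − ν(S)|`, the supremum over all subsets `S`. -/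
noncomputable def dTV {α : Type*} [MeasurableSpace α] (μ ν : Measure α) : ℝ :=
  ⨆ S : Set α, |(μ S).toReal - (ν S).toReal|

/-- `π` is a coupling of `μ` and `ν`: a probability measure on `α × α` whose first
marginal is `μ` and whose second marginal is `ν`. -/
def IsCoupling {α : Type*} [MeasurableSpace α] (π : Measure (α × α))
    (μ ν : Measure α) : Prop :=
  IsProbabilityMeasure π ∧ π.map Prod.fst = μ ∧ π.map Prod.snd = ν

/-!
Under any coupling the events `{ξ₁ ∈ S}` and `{ξ₂ ∈ S}` differ only off the diagonal, so every
coupling puts mass at least `|μ S - ν S|` there. Conversely, a Hahn decomposition writes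
`μ = p + μ'` and `ν = p + ν'` with `μ' ⟂ₘ ν'`. Putting the common part `p` on the diagonal and
coupling the residuals independently (normalised by their common mass) gives a coupling whose
off-diagonal mass is at most `ν' univ = ν s - μ s`, where `s` carries `ν'` and is `μ'`-null.
-/

open Measure Set
open scoped ENNReal

section

variable {α : Type*} [MeasurableSpace α]

theorem IsCoupling.abs_sub_le [DiscreteMeasurableSpace α] {π : Measure (α × α)}
    {μ ν : Measure α} (h : IsCoupling π μ ν) (S : Set α) :
    |(μ S).toReal - (ν S).toReal| ≤ (π {x | x.1 ≠ x.2}).toReal := by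
  obtain ⟨hπ, rfl, rfl⟩ := h
  have sub_le_off_diag (A B : Set (α × α)) (hAB : A \ B ⊆ {x | x.1 ≠ x.2}) :
      (π A).toReal - (π B).toReal ≤ (π {x | x.1 ≠ x.2}).toReal :=
    (le_measureReal_sdiff).trans (measureReal_mono hAB)
  rw [map_apply measurable_fst .of_discrete, map_apply measurable_snd .of_discrete,
    abs_sub_le_iff]
  exact ⟨sub_le_off_diag _ _ fun x ⟨h₁, h₂⟩ hx => h₂ (show x.2 ∈ S from hx ▸ h₁),
    sub_le_off_diag _ _ fun x ⟨h₂, h₁⟩ hx => h₁ (show x.1 ∈ S from hx ▸ h₂)⟩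

theorem IsCoupling.dTV_le [DiscreteMeasurableSpace α] {π : Measure (α × α)}
    {μ ν : Measure α} (h : IsCoupling π μ ν) :
    dTV μ ν ≤ (π {x | x.1 ≠ x.2}).toReal :=
  ciSup_le h.abs_sub_le

theorem abs_sub_le_dTV (μ ν : Measure α) [IsProbabilityMeasure μ] [IsProbabilityMeasure ν]
    (S : Set α) : |(μ S).toReal - (ν S).toReal| ≤ dTV μ ν :=
  le_ciSup (f := fun S : Set α => |(μ S).toReal - (ν S).toReal|)
    ⟨1, forall_mem_range.2 fun _ => abs_sub_le_of_nonneg_of_le measureReal_nonneg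
      measureReal_le_one measureReal_nonneg measureReal_le_one⟩ S

theorem exists_eq_add_add_mutuallySingular (μ ν : Measure α) [IsFiniteMeasure μ]
    [IsFiniteMeasure ν] : ∃ p μ' ν' : Measure α, μ' ⟂ₘ ν' ∧ μ = p + μ' ∧ ν = p + ν' := by
  obtain ⟨s, hs, hνμ, hμν⟩ := hahn_decomposition μ ν
  have hle_s : ν.restrict s ≤ μ.restrict s := le_iff.2 fun t ht => by
    simpa only [restrict_apply ht] using hνμ _ (ht.inter hs) inter_subset_right
  have hle_sc : μ.restrict sᶜ ≤ ν.restrict sᶜ := le_iff.2 fun t ht => by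
    simpa only [restrict_apply ht] using hμν _ (ht.inter hs.compl) inter_subset_right
  refine ⟨ν.restrict s + μ.restrict sᶜ, μ.restrict s - ν.restrict s,
    ν.restrict sᶜ - μ.restrict sᶜ, ?_, ?_, ?_⟩
  · have : μ.restrict s ⟂ₘ ν.restrict sᶜ := ⟨sᶜ, hs.compl, by simp [hs], by simp [hs]⟩
    exact this.mono sub_le sub_le
  · conv_lhs => rw [← restrict_add_restrict_compl (μ := μ) hs, ← sub_add_cancel_of_le hle_s]
    ac_rfl
  · conv_lhs => rw [← restrict_add_restrict_compl (μ := ν) hs, ← sub_add_cancel_of_le hle_sc]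
    ac_rfl

theorem toReal_measure_univ_le_dTV_of_mutuallySingular {p μ' ν' : Measure α}
    [IsProbabilityMeasure (p + μ')] [IsProbabilityMeasure (p + ν')] (h : μ' ⟂ₘ ν') :
    (ν' univ).toReal ≤ dTV (p + μ') (p + ν') := by
  obtain ⟨s, -, hμ's, hν's⟩ := h
  have : IsFiniteMeasure p := isFiniteMeasure_of_le (p + μ') (Measure.le_add_right le_rfl)
  have : IsFiniteMeasure ν' := isFiniteMeasure_of_le (p + ν') (Measure.le_add_left le_rfl)
  have hν'univ : ν' univ = ν' s := measure_congr (ae_eq_univ.2 hν's).symm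
  calc (ν' univ).toReal = ((p + ν') s).toReal - ((p + μ') s).toReal := by
        simp [hν'univ, hμ's, ENNReal.toReal_add]
    _ ≤ |((p + μ') s).toReal - ((p + ν') s).toReal| := by
        rw [abs_sub_comm]; exact le_abs_self _
    _ ≤ dTV (p + μ') (p + ν') := abs_sub_le_dTV _ _ s

theorem inv_measure_univ_smul_smul (μ : Measure α) [IsFiniteMeasure μ] :
    (μ univ)⁻¹ • μ univ • μ = μ := by
  by_cases h : μ univ = 0
  · simp [measure_univ_eq_zero.1 h]
  · rw [smul_smul, ENNReal.inv_mul_cancel h (measure_ne_top μ univ), one_smul]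

theorem map_fst_inv_smul_prod {μ ν : Measure α} [IsFiniteMeasure μ] [IsFiniteMeasure ν]
    (h : μ univ = ν univ) : ((μ univ)⁻¹ • μ.prod ν).map Prod.fst = μ := by
  rw [Measure.map_smul, map_fst_prod, ← h, inv_measure_univ_smul_smul]

theorem map_snd_inv_smul_prod {μ ν : Measure α} [IsFiniteMeasure μ] [IsFiniteMeasure ν]
    (h : μ univ = ν univ) : ((μ univ)⁻¹ • μ.prod ν).map Prod.snd = ν := by
  rw [Measure.map_smul, map_snd_prod, h, inv_measure_univ_smul_smul]

theorem map_fst_map_diag (p : Measure α) : (p.map Function.diag).map Prod.fst = p := by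
  rw [map_map measurable_fst measurable_diag]
  exact map_id

theorem map_snd_map_diag (p : Measure α) : (p.map Function.diag).map Prod.snd = p := by
  rw [map_map measurable_snd measurable_diag]
  exact map_id

noncomputable def maximalCoupling (p μ' ν' : Measure α) : Measure (α × α) :=
  p.map Function.diag + (μ' univ)⁻¹ • μ'.prod ν'

theorem isCoupling_maximalCoupling {p μ' ν' : Measure α} [IsProbabilityMeasure (p + μ')]
    [IsProbabilityMeasure (p + ν')] :
    IsCoupling (maximalCoupling p μ' ν') (p + μ') (p + ν') := by
  have : IsFiniteMeasure p := isFiniteMeasure_of_le (p + μ') (Measure.le_add_right le_rfl)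
  have : IsFiniteMeasure μ' := isFiniteMeasure_of_le (p + μ') (Measure.le_add_left le_rfl)
  have : IsFiniteMeasure ν' := isFiniteMeasure_of_le (p + ν') (Measure.le_add_left le_rfl)
  have hmass : μ' univ = ν' univ := (ENNReal.add_right_inj (measure_ne_top p univ)).1 <| by
    rw [← add_apply, ← add_apply, measure_univ, measure_univ]
  have hfst : (maximalCoupling p μ' ν').map Prod.fst = p + μ' := by
    rw [maximalCoupling, Measure.map_add _ _ measurable_fst, map_fst_map_diag,
      map_fst_inv_smul_prod hmass]
  have hsnd : (maximalCoupling p μ' ν').map Prod.snd = p + ν' := by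
    rw [maximalCoupling, Measure.map_add _ _ measurable_snd, map_snd_map_diag,
      map_snd_inv_smul_prod hmass]
  have : IsProbabilityMeasure ((maximalCoupling p μ' ν').map Prod.fst) := by rwa [hfst]
  exact ⟨isProbabilityMeasure_of_map Prod.fst, hfst, hsnd⟩

theorem maximalCoupling_apply_ne_le [MeasurableEq α] (p μ' ν' : Measure α) [SFinite ν'] :
    maximalCoupling p μ' ν' {x | x.1 ≠ x.2} ≤ ν' univ := by
  have hdiag : p.map Function.diag {x | x.1 ≠ x.2} = 0 := by
    rw [map_apply (s := {x | x.1 ≠ x.2}) measurable_diag measurableSet_diagonal.compl]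
    simp
  calc maximalCoupling p μ' ν' {x | x.1 ≠ x.2}
      ≤ ((μ' univ)⁻¹ • μ'.prod ν') univ := by
        rw [maximalCoupling, Measure.add_apply, hdiag, zero_add]
        exact measure_mono (subset_univ _)
    _ = (μ' univ)⁻¹ * μ' univ * ν' univ := by
        rw [Measure.smul_apply, ← univ_prod_univ, prod_prod, smul_eq_mul, mul_assoc]
    _ ≤ ν' univ := mul_le_of_le_one_left zero_le (ENNReal.inv_mul_le_one _)

end

theorem exists_optimal_coupling_general {α : Type*} [Fintype α]
    [MeasurableSpace α] [DiscreteMeasurableSpace α]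
    (μ ν : Measure α) (hμ : IsProbabilityMeasure μ) (hν : IsProbabilityMeasure ν) :
    ∃ π : Measure (α × α), IsCoupling π μ ν ∧
      (π {p : α × α | p.1 ≠ p.2}).toReal = dTV μ ν ∧
      ∀ π' : Measure (α × α), IsCoupling π' μ ν →
        dTV μ ν ≤ (π' {p : α × α | p.1 ≠ p.2}).toReal := by
  obtain ⟨p, μ', ν', hsing, rfl, rfl⟩ := exists_eq_add_add_mutuallySingular μ ν
  have : IsFiniteMeasure ν' := isFiniteMeasure_of_le (p + ν') (Measure.le_add_left le_rfl)
  have hπ : IsCoupling (maximalCoupling p μ' ν') (p + μ') (p + ν') := isCoupling_maximalCoupling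
  refine ⟨_, hπ, le_antisymm ?_ hπ.dTV_le, fun π' hπ' => hπ'.dTV_le⟩
  calc (maximalCoupling p μ' ν' {x | x.1 ≠ x.2}).toReal ≤ (ν' univ).toReal :=
        ENNReal.toReal_mono (measure_ne_top _ _) (maximalCoupling_apply_ne_le p μ' ν')
    _ ≤ dTV (p + μ') (p + ν') := toReal_measure_univ_le_dTV_of_mutuallySingular hsing

/-- For probability measures `μ, ν` on a nonempty finite set `α` there exists an
optimal coupling: a coupling `π` of `μ` and `ν` with
`π({(a,b) : a ≠ b}) = d_TV(μ, ν)`; moreover every coupling `π'` of `μ` and `ν`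
satisfies `π'({(a,b) : a ≠ b}) ≥ d_TV(μ, ν)`, so the optimal coupling achieves
the infimum over all couplings. -/
theorem exists_optimal_coupling {α : Type*} [Fintype α] [Nonempty α]
    [MeasurableSpace α] [DiscreteMeasurableSpace α]
    (μ ν : Measure α) (hμ : IsProbabilityMeasure μ) (hν : IsProbabilityMeasure ν) :
    ∃ π : Measure (α × α), IsCoupling π μ ν ∧
      (π {p : α × α | p.1 ≠ p.2}).toReal = dTV μ ν ∧
      ∀ π' : Measure (α × α), IsCoupling π' μ ν →
        dTV μ ν ≤ (π' {p : α × α | p.1 ≠ p.2}).toReal :=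
  exists_optimal_coupling_general μ ν hμ hν
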